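/- arXiv:2602.12453 — 2 statements merged into one kernel-verified Lean document; each statement's English description precedes it below -/
import Mathlib

section
/- Let n ≥ 2, let y' = (y_1,…,y_{n-1}) ∈ ℝ^{n-1} with |y'| < 1 and y_1 = 1/√2, let q = sqrt(1 - |y'|²), and let x ∈ ℝ^n satisfy the tangency relation x_1 + √2·Σ_{i=2}^{n-1} x_i y_i + x_n·sqrt(1 - 2|y''|²) = √2 (where y'' = (y_2,…,y_{n-1})) together with the quadric equation (x_1 - 1/√2)² − Σ_{i=2}^{n-1}(x_i - y_i)² − (x_n - q)² = t. Then t ≤ 0. -/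
open Finset Real

/-- On the upper hemisphere with `y₁ = 1/√2`, a point `x` on the
tangent plane that also lies on the quadric with level `t` forces `t ≤ 0`.
Here `y''` collects the coordinates `y₂,…,y_{n-1}`, `xm` collects `x₂,…,x_{n-1}`. -/
theorem stmt8 (m : ℕ) (y'' : Fin m → ℝ) (hy : ∑ i, y'' i ^ 2 < 1 / 2)
    (q : ℝ) (hq : q = Real.sqrt (1 - (1 / Real.sqrt 2) ^ 2 - ∑ i, y'' i ^ 2))
    (x1 xn : ℝ) (xm : Fin m → ℝ) (t : ℝ)
    (htan : x1 + Real.sqrt 2 * ∑ i, xm i * y'' i +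
      xn * Real.sqrt (1 - 2 * ∑ i, y'' i ^ 2) = Real.sqrt 2)
    (hquad : (x1 - 1 / Real.sqrt 2) ^ 2 - ∑ i, (xm i - y'' i) ^ 2 - (xn - q) ^ 2 = t) :
    t ≤ 0 := by
  set s := ∑ i, y'' i ^ 2 with hs
  set v := ∑ i, xm i * y'' i with hv
  set A := ∑ i, xm i ^ 2 with hA
  have h2 : Real.sqrt 2 ^ 2 = 2 := Real.sq_sqrt (by norm_num)
  have h2pos : (0:ℝ) < Real.sqrt 2 := Real.sqrt_pos.mpr (by norm_num)
  have hinv : (1 / Real.sqrt 2) ^ 2 = 1 / 2 := by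
    rw [div_pow, h2, one_pow]
  have hq' : q = Real.sqrt (1 / 2 - s) := by
    rw [hq, hinv]; ring_nf
  have hq2 : q ^ 2 = 1 / 2 - s := by
    rw [hq']; exact Real.sq_sqrt (by linarith)
  have hq0 : 0 ≤ q := by rw [hq']; exact Real.sqrt_nonneg _
  have hsq : Real.sqrt (1 - 2 * s) = Real.sqrt 2 * q := by
    rw [hq', ← Real.sqrt_mul (by norm_num : (0:ℝ) ≤ 2)]
    ring_nf
  -- Cauchy–Schwarz for (xm, xn) and (y'', q)
  have key : (v + xn * q) ^ 2 ≤ (A + xn ^ 2) * (s + q ^ 2) := by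
    have h := Finset.sum_mul_sq_le_sq_mul_sq (Finset.univ : Finset (Fin (m+1)))
      (Fin.snoc xm xn) (Fin.snoc y'' q)
    simpa [Fin.sum_univ_castSucc, Fin.snoc_castSucc, Fin.snoc_last, hv, hA, hs] using h
  -- expand the middle sum
  have hexp : ∑ i, (xm i - y'' i) ^ 2 = A - 2 * v + s := by
    rw [hA, hv, hs, Finset.mul_sum, ← Finset.sum_sub_distrib, ← Finset.sum_add_distrib]
    apply Finset.sum_congr rfl; intros; ring
  have hx1 : x1 - 1 / Real.sqrt 2 = 1 / Real.sqrt 2 - Real.sqrt 2 * (v + xn * q) := by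
    rw [hsq] at htan
    field_simp
    nlinarith [htan, h2]
  rw [hx1, hexp] at hquad
  have hhalf : (1 / Real.sqrt 2) * Real.sqrt 2 = 1 := by
    field_simp
  have ht : t = 2 * (v + xn * q) ^ 2 - A - xn ^ 2 := by
    linear_combination (-1) * hquad + (v + xn * q) ^ 2 * h2 + hinv +
      (-2 * (v + xn * q)) * hhalf + (-1) * hq2
  have hhalf2 : s + q ^ 2 = 1 / 2 := by linarith
  rw [hhalf2] at key
  linarith
end

section
/- Let A' be an invertible symmetric (n−1)×(n−1) real matrix, b ∈ ℝ \ {0}, and q : Ω → ℝ smooth on an open set Ω ⊆ ℝ^{n-1}. Define the map Φ : Ω × ℝ^n × (ℝ \ {0}) → Ω × ℝ × ℝ^{n-1} × ℝ by Φ(y', x, ω) = (y', (x'−y')^T A' (x'−y') + b(x_n − q(y')), ω(2A'(x'−y') + b∇q(y')), ω), where x' = (x_1,…,x_{n-1}). Then Φ is injective. -/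
open Matrix Finset Real

/-- The left projection map `Φ(y',x,ω) =
(y', (x'−y')ᵀA'(x'−y') + b(xₙ − q(y')), ω(2A'(x'−y') + b∇q(y')), ω)` of the
paraboloid-type Radon transform is injective (on `Ω × ℝⁿ × (ℝ∖{0})`). -/
theorem stmt15 (m : ℕ) (hm : 0 < m)
    (A' : Matrix (Fin m) (Fin m) ℝ) (hA'symm : A'.IsSymm) (hA'inv : IsUnit A'.det)
    (b : ℝ) (hb : b ≠ 0)
    (Ω : Set (Fin m → ℝ)) (hΩ : IsOpen Ω)
    (q : (Fin m → ℝ) → ℝ) (hq : ContDiffOn ℝ (⊤ : ℕ∞) q Ω)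
    (Φ : (Fin m → ℝ) × (Fin (m + 1) → ℝ) × ℝ →
      (Fin m → ℝ) × ℝ × (Fin m → ℝ) × ℝ)
    (hΦ : ∀ y' x ω, Φ (y', x, ω) =
      (y',
       (∑ i, ((fun i => x i.castSucc - y' i) i) *
          (A'.mulVec (fun i => x i.castSucc - y' i)) i) + b * (x (Fin.last m) - q y'),
       fun i => ω * (2 * (A'.mulVec (fun j => x j.castSucc - y' j)) i +
          b * fderiv ℝ q y' (Pi.single i 1)),
       ω)) :
    Set.InjOn Φ {p | p.1 ∈ Ω ∧ p.2.2 ≠ 0} := by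
  rintro ⟨y1, x1, ω1⟩ ⟨-, hω1⟩ ⟨y2, x2, ω2⟩ ⟨-, hω2⟩ heq
  rw [hΦ, hΦ, Prod.mk.injEq, Prod.mk.injEq, Prod.mk.injEq] at heq
  obtain ⟨hy, h2, h3, hω⟩ := heq
  subst hy
  subst hω
  -- from the third component, recover x' (using ω ≠ 0 and invertibility of A')
  have hM : A'.mulVec (fun j => x1 j.castSucc - y1 j)
      = A'.mulVec (fun j => x2 j.castSucc - y1 j) := by
    funext i
    have := congrFun h3 i
    have h := mul_left_cancel₀ hω1 this
    linarith
  have hinj : Function.Injective A'.mulVec :=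
    Matrix.mulVec_injective_iff_isUnit.2 ((Matrix.isUnit_iff_isUnit_det A').2 hA'inv)
  have hx' : (fun j => x1 j.castSucc - y1 j) = (fun j => x2 j.castSucc - y1 j) :=
    hinj hM
  have hx'' : ∀ j : Fin m, x1 j.castSucc = x2 j.castSucc := by
    intro j
    have := congrFun hx' j
    simpa using this
  -- from the second component, recover xₙ
  have hsum : (∑ i, (x1 i.castSucc - y1 i) * (A'.mulVec (fun i => x1 i.castSucc - y1 i)) i)
      = ∑ i, (x2 i.castSucc - y1 i) * (A'.mulVec (fun i => x2 i.castSucc - y1 i)) i := by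
    apply Finset.sum_congr rfl
    intro i _
    rw [hx'' i, hM]
  have hlast : x1 (Fin.last m) = x2 (Fin.last m) := by
    have hb' : b * (x1 (Fin.last m) - q y1) = b * (x2 (Fin.last m) - q y1) := by
      simp only [hsum] at h2; linarith
    have := mul_left_cancel₀ hb hb'
    linarith
  have hx : x1 = x2 := by
    funext i
    refine Fin.lastCases ?_ ?_ i
    · exact hlast
    · exact hx''
  rw [hx]
end
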